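/- In any non-right triangle ABC, if the 2-trisectors from A and B are equal (i.e., cevians AA₁, BB₁ with ∠BAA₁ = 2∠BAC and ∠ABB₁ = 2∠ABC, and AA₁ = BB₁), then the triangle is isosceles. -/

import Mathlib

/-!
Measure angles from `AB` in complex coordinates, via the Kähler form: with `AB ↦ n = AB²` and
`AC ↦ k`, the point `A₁` of line `BC` becomes `n + t (k - n)`, and `∡ B A A₁ = 2 ∡ B A C` says
that it equals `r k²` for some `r > 0`. Comparing imaginary and then real parts gives
`r (AB⁴ - AB² BC²) = AB²`, i.e. `AA₁ (AB² - BC²) = AC² AB`. The same formula for `BB₁`, together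
with `AA₁ = BB₁`, yields `(AC² - BC²)(AB² - AC² - BC²) = 0`, and the second factor vanishes only
when the angle at `C` is right.
-/

open EuclideanGeometry Real

noncomputable section

abbrev Pt : Type := EuclideanSpace ℝ (Fin 2)

namespace Complex

theorem im_ne_zero_of_two_zsmul_arg_ne_zero {z : ℂ} (h : (2 : ℤ) • (arg z : Angle) ≠ 0) :
    z.im ≠ 0 := by
  obtain ⟨h0, hπ⟩ := Angle.two_zsmul_ne_zero_iff.mp h
  intro him
  rcases le_or_gt 0 z.re with hre | hre
  · exact h0 (by rw [arg_eq_zero_iff.mpr ⟨hre, him⟩, Angle.coe_zero])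
  · exact hπ (by rw [arg_eq_pi_iff.mpr ⟨hre, him⟩])

theorem exists_pos_eq_mul_sq_of_arg_eq_two_zsmul {z w : ℂ} (hz : z ≠ 0) (hw : w ≠ 0)
    (h : (arg z : Angle) = (2 : ℤ) • (arg w : Angle)) : ∃ r : ℝ, 0 < r ∧ z = r * w ^ 2 := by
  have hw2 : w ^ 2 ≠ 0 := pow_ne_zero 2 hw
  rw [two_zsmul, ← arg_mul_coe_angle hw hw, ← sq, arg_coe_angle_eq_iff, eq_comm,
    arg_eq_arg_iff hw2 hz] at h
  refine ⟨‖z‖ / ‖w ^ 2‖, div_pos (norm_pos_iff.mpr hz) (norm_pos_iff.mpr hw2), ?_⟩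
  rw [ofReal_div, h]

theorem norm_mul_sq_sub_sq_eq_of_arg_eq_two_zsmul {n t : ℝ} {k : ℂ}
    (hk : (2 : ℤ) • (arg k : Angle) ≠ 0)
    (h : (arg (n + t * (k - n)) : Angle) = (2 : ℤ) • (arg k : Angle)) :
    ‖(n + t * (k - n) : ℂ)‖ * (n ^ 2 - ‖k - n‖ ^ 2) = n * ‖k‖ ^ 2 := by
  have him : k.im ≠ 0 := im_ne_zero_of_two_zsmul_arg_ne_zero hk
  have hk0 : k ≠ 0 := fun h0 ↦ him (by simp [h0])
  have hz : (n + t * (k - n) : ℂ) ≠ 0 := by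
    intro h0
    rw [h0, arg_zero, Angle.coe_zero] at h
    exact hk h.symm
  obtain ⟨r, hr, hrk⟩ := exists_pos_eq_mul_sq_of_arg_eq_two_zsmul hz hk0 h
  have hre := congrArg re hrk
  have him' := congrArg im hrk
  simp only [add_re, add_im, mul_re, mul_im, sub_re, sub_im, ofReal_re, ofReal_im, sq] at hre him'
  have ht : t = 2 * r * k.re := by
    apply mul_right_cancel₀ him
    linear_combination him'
  have hr_eq : r * (n ^ 2 - ‖k - n‖ ^ 2) = n := by
    rw [Complex.sq_norm, normSq_apply]
    simp only [sub_re, sub_im, ofReal_re, ofReal_im]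
    rw [ht] at hre
    linear_combination -hre
  calc ‖(n + t * (k - n) : ℂ)‖ * (n ^ 2 - ‖k - n‖ ^ 2)
      = r * (n ^ 2 - ‖k - n‖ ^ 2) * ‖k‖ ^ 2 := by
        rw [hrk, norm_mul, norm_pow, norm_real, Real.norm_of_nonneg hr.le]; ring
    _ = n * ‖k‖ ^ 2 := by rw [hr_eq]

end Complex

namespace Orientation

variable {V : Type*} [NormedAddCommGroup V] [InnerProductSpace ℝ V]
  [Fact (Module.finrank ℝ V = 2)] (o : Orientation ℝ V (Fin 2))

theorem norm_mul_sq_sub_sq_eq_of_oangle_eq_two_zsmul {u w : V} (t : ℝ)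
    (hw : (2 : ℤ) • o.oangle u w ≠ 0)
    (h : o.oangle u (u + t • (w - u)) = (2 : ℤ) • o.oangle u w) :
    ‖u + t • (w - u)‖ * (‖u‖ ^ 2 - ‖w - u‖ ^ 2) = ‖w‖ ^ 2 * ‖u‖ := by
  have hu : u ≠ 0 := by
    rintro rfl
    simp at hw
  have hkahler : o.kahler u (u + t • (w - u))
      = (‖u‖ ^ 2 : ℝ) + t * (o.kahler u w - (‖u‖ ^ 2 : ℝ)) := by
    simp only [map_add, map_smul, map_sub, kahler_apply_self, Complex.real_smul]
    push_cast
    ring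
  have hsub : ‖o.kahler u w - (‖u‖ ^ 2 : ℝ)‖ = ‖u‖ * ‖w - u‖ := by
    rw [← o.norm_kahler, map_sub, kahler_apply_self]
    push_cast
    rfl
  unfold oangle at h hw
  rw [hkahler] at h
  have key := Complex.norm_mul_sq_sub_sq_eq_of_arg_eq_two_zsmul hw h
  rw [← hkahler, hsub, o.norm_kahler, o.norm_kahler] at key
  have hu3 : ‖u‖ ^ 3 ≠ 0 := pow_ne_zero 3 (norm_ne_zero_iff.mpr hu)
  apply mul_left_cancel₀ hu3
  linear_combination key

end Orientation

namespace EuclideanGeometry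

variable {V P : Type*} [NormedAddCommGroup V] [InnerProductSpace ℝ V] [MetricSpace P]
  [NormedAddTorsor V P] [Fact (Module.finrank ℝ V = 2)] [Module.Oriented ℝ V (Fin 2)]

theorem dist_mul_sq_sub_sq_eq_of_oangle_eq_two_zsmul {A B C A₁ : P}
    (hABC : AffineIndependent ℝ ![A, B, C]) (hA₁ : A₁ ∈ line[ℝ, B, C])
    (h : ∡ B A A₁ = (2 : ℤ) • ∡ B A C) :
    dist A A₁ * (dist A B ^ 2 - dist B C ^ 2) = dist A C ^ 2 * dist A B := by
  obtain ⟨t, rfl⟩ := mem_affineSpan_pair_iff_exists_lineMap_eq.mp hA₁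
  have hv : AffineMap.lineMap B C t -ᵥ A = (B -ᵥ A) + t • ((C -ᵥ A) - (B -ᵥ A)) := by
    rw [AffineMap.lineMap_apply, vadd_vsub_assoc, vsub_sub_vsub_cancel_right, add_comm]
  have hBAC : (2 : ℤ) • ∡ B A C ≠ 0 := Angle.two_zsmul_ne_zero_iff.mpr
    (oangle_ne_zero_and_ne_pi_iff_affineIndependent.mpr hABC.comm_left)
  rw [oangle, oangle, hv] at h
  have key := positiveOrientation.norm_mul_sq_sub_sq_eq_of_oangle_eq_two_zsmul t hBAC h
  rw [← hv, vsub_sub_vsub_cancel_right] at key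
  rw [dist_comm A, dist_comm A B, dist_comm A C, dist_comm B C]
  simpa only [dist_eq_norm_vsub V] using key

end EuclideanGeometry

theorem isosceles_of_equal_two_trisectors
    [Fact (Module.finrank ℝ (EuclideanSpace ℝ (Fin 2)) = 2)]
    [Module.Oriented ℝ (EuclideanSpace ℝ (Fin 2)) (Fin 2)]
    (A B C A₁ B₁ : Pt)
    (hABC : AffineIndependent ℝ ![A, B, C])
    (hnrC : ∠ A C B ≠ π / 2)
    (hA₁ : A₁ ∈ affineSpan ℝ ({B, C} : Set Pt))
    (hB₁ : B₁ ∈ affineSpan ℝ ({A, C} : Set Pt))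
    (htriA : ∡ B A A₁ = (2 : ℤ) • ∡ B A C)
    (htriB : ∡ A B B₁ = (2 : ℤ) • ∡ A B C)
    (hlen : dist A A₁ = dist B B₁) :
    dist A C = dist B C := by
  have hA := dist_mul_sq_sub_sq_eq_of_oangle_eq_two_zsmul hABC hA₁ htriA
  have hB := dist_mul_sq_sub_sq_eq_of_oangle_eq_two_zsmul hABC.comm_left hB₁ htriB
  rw [dist_comm B A, ← hlen] at hB
  have hAB : dist A B ≠ 0 :=
    dist_ne_zero.mpr (ne₁₂_of_not_collinear (affineIndependent_iff_not_collinear_set.mp hABC))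
  have hpyth : dist A B ^ 2 - dist A C ^ 2 - dist B C ^ 2 ≠ 0 := by
    rw [sub_sub, sub_ne_zero, sq, sq, sq]
    exact mt (dist_sq_eq_dist_sq_add_dist_sq_iff_angle_eq_pi_div_two A C B).mp hnrC
  have key : (dist A C ^ 2 - dist B C ^ 2) * (dist A B ^ 2 - dist A C ^ 2 - dist B C ^ 2)
      * dist A B = 0 := by
    linear_combination (dist A B ^ 2 - dist B C ^ 2) * hB - (dist A B ^ 2 - dist A C ^ 2) * hA
  have hsq : dist A C ^ 2 = dist B C ^ 2 := by
    simpa [sub_eq_zero, hpyth, hAB] using key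
  exact (pow_left_inj₀ dist_nonneg dist_nonneg two_ne_zero).mp hsq
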